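/- Let G be a finite connected weighted graph. The Jacobian group J(G) is finite if and only if, in each maximal 2-connected subgraph of G, all edge lengths are pairwise commensurable (i.e., all ratios of edge lengths are rational). -/
import Mathlib


/-- A finite weighted (multi)graph with a fixed orientation of the edges:
vertex type `V`, edge type `E`, tail/head maps and a positive length function. -/
structure WGraph where
  V : Type
  E : Type
  [fV : Fintype V]
  [fE : Fintype E]
  [dV : DecidableEq V]
  [dE : DecidableEq E]
  tail : E → V
  head : E → V
  len : E → ℝ
  len_pos : ∀ e, 0 < len e

attribute [instance] WGraph.fV WGraph.fE WGraph.dV WGraph.dE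

namespace WGraph

variable (G : WGraph)

/-- Two vertices are adjacent if some edge joins them (in either direction). -/
def Adj (x y : G.V) : Prop :=
  ∃ e, (G.tail e = x ∧ G.head e = y) ∨ (G.tail e = y ∧ G.head e = x)

/-- A weighted graph is connected if any two vertices are joined by a walk. -/
def Connected : Prop := ∀ x y : G.V, Relation.ReflTransGen G.Adj x y

/-- The differential `d : C_0(G,ℝ) → C_1(G,ℝ)`, `(df)(e) = (f(e⁺) - f(e⁻))/ℓ(e)`. -/
noncomputable def d (f : G.V → ℝ) : G.E → ℝ :=
  fun e => (f (G.head e) - f (G.tail e)) / G.len e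

/-- The adjoint `d* : C_1(G,ℝ) → C_0(G,ℝ)`,
`(d*α)(x) = Σ_{e⁺ = x} α(e) - Σ_{e⁻ = x} α(e)`. -/
def dStar (α : G.E → ℝ) : G.V → ℝ := fun x =>
  (∑ e ∈ Finset.univ.filter fun e => G.head e = x, α e) -
    ∑ e ∈ Finset.univ.filter fun e => G.tail e = x, α e

/-- The inner product `⟨α,β⟩ = Σ_e α(e) β(e) ℓ(e)` on real 1-chains. -/
noncomputable def ip (α β : G.E → ℝ) : ℝ := ∑ e, α e * β e * G.len e

/-- Real 1-cycles: the kernel of `d*`. -/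
def IsCycle (α : G.E → ℝ) : Prop := ∀ x, G.dStar α x = 0

/-- Exact 1-chains: the image of `d`. -/
def IsExact (α : G.E → ℝ) : Prop := ∃ f : G.V → ℝ, α = G.d f

/-- A 1-form `ω = Σ ω_e de` (recorded by its coefficients) is harmonic if at every
vertex the incoming and outgoing coefficients sum to the same value. -/
def Harmonic (ω : G.E → ℝ) : Prop :=
  ∀ x, (∑ e ∈ Finset.univ.filter fun e => G.head e = x, ω e) =
    ∑ e ∈ Finset.univ.filter fun e => G.tail e = x, ω e

/-- Integration of the 1-form `ω` along the 1-chain `α`: `∫_α ω = Σ_e ω_e α(e) ℓ(e)`. -/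
noncomputable def intPair (ω α : G.E → ℝ) : ℝ := ∑ e, ω e * α e * G.len e

/-- `d*` on integral 1-chains. -/
def dStarZ (α : G.E → ℤ) : G.V → ℤ := fun x =>
  (∑ e ∈ Finset.univ.filter fun e => G.head e = x, α e) -
    ∑ e ∈ Finset.univ.filter fun e => G.tail e = x, α e

/-- Integral 1-cycles. -/
def IsCycleZ (α : G.E → ℤ) : Prop := ∀ x, G.dStarZ α x = 0

/-- `α ∈ im(d)_ℤ`: `α` is an integral 1-chain which is the differential of a real
function on the vertices (a function with integer slopes). -/
def IsExactZ (α : G.E → ℤ) : Prop :=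
  ∃ f : G.V → ℝ, ∀ e, (α e : ℝ) = G.d f e

/-- The subgroup `H_1(G,ℤ) ⊕ im(d)_ℤ` of `C_1(G,ℤ)`, i.e. the subgroup generated by
integral cycles together with integral exact chains. -/
def jacRel : AddSubgroup (G.E → ℤ) :=
  AddSubgroup.closure {α | G.IsCycleZ α ∨ G.IsExactZ α}

/-- The Jacobian group of a weighted graph: `J(G) = C_1(G,ℤ)/(H_1(G,ℤ) ⊕ im(d)_ℤ)`. -/
def Jac := (G.E → ℤ) ⧸ G.jacRel

noncomputable instance : AddCommGroup G.Jac :=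
  inferInstanceAs (AddCommGroup ((G.E → ℤ) ⧸ G.jacRel))

/-- Divisors of degree zero. -/
def Div0 : AddSubgroup (G.V → ℤ) where
  carrier := {D | ∑ x, D x = 0}
  add_mem' := by
    intro a b ha hb
    simp only [Set.mem_setOf_eq] at *
    simp [Finset.sum_add_distrib, ha, hb]
  zero_mem' := by simp
  neg_mem' := by
    intro a ha
    simp only [Set.mem_setOf_eq] at *
    simp [ha]

/-- `d*` as a group homomorphism on integral 1-chains. -/
def dStarZHom : (G.E → ℤ) →+ (G.V → ℤ) where
  toFun := G.dStarZ
  map_zero' := by funext x; simp [dStarZ]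
  map_add' := by
    intro a b
    funext x
    simp [dStarZ, Finset.sum_add_distrib]
    ring

/-- The subgroup `im(d)_ℤ` of `C_1(G,ℤ)`. -/
def imdZ : AddSubgroup (G.E → ℤ) where
  carrier := {α | G.IsExactZ α}
  add_mem' := by
    rintro a b ⟨f, hf⟩ ⟨g, hg⟩
    exact ⟨f + g, fun e => by
      simp only [Pi.add_apply, Int.cast_add, hf e, hg e, d]; ring⟩
  zero_mem' := ⟨0, fun e => by simp [d]⟩
  neg_mem' := by
    rintro a ⟨f, hf⟩
    exact ⟨-f, fun e => by
      simp only [Pi.neg_apply, Int.cast_neg, hf e, d]; ring⟩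

/-- Principal divisors: `Prin(G) = d*(im(d)_ℤ)`. -/
def Prin : AddSubgroup (G.V → ℤ) := G.imdZ.map G.dStarZHom

lemma sum_dStarZ (α : G.E → ℤ) : ∑ x, G.dStarZ α x = 0 := by
  simp only [dStarZ, Finset.sum_sub_distrib]
  rw [Finset.sum_fiberwise, Finset.sum_fiberwise]
  simp

/-- The degree-zero Picard group `Pic(G) = Div⁰(G)/Prin(G)`. -/
def PicZ := G.Div0 ⧸ (G.Prin.addSubgroupOf G.Div0)

noncomputable instance : AddCommGroup G.PicZ :=
  inferInstanceAs (AddCommGroup (G.Div0 ⧸ (G.Prin.addSubgroupOf G.Div0)))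

/-- The weighted graph obtained by deleting the edge `e₀`. -/
def delEdge (e₀ : G.E) : WGraph where
  V := G.V
  E := {e : G.E // e ≠ e₀}
  tail := fun e => G.tail e.1
  head := fun e => G.head e.1
  len := fun e => G.len e.1
  len_pos := fun e => G.len_pos e.1

/-- An edge is a bridge if deleting it disconnects the graph. -/
def IsBridge (e₀ : G.E) : Prop := ¬ (G.delEdge e₀).Connected

/-- The weighted graph obtained by deleting a vertex `z` (and all incident edges). -/
def delVertex (z : G.V) : WGraph where
  V := {x : G.V // x ≠ z}
  E := {e : G.E // G.tail e ≠ z ∧ G.head e ≠ z}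
  tail := fun e => ⟨G.tail e.1, e.2.1⟩
  head := fun e => ⟨G.head e.1, e.2.2⟩
  len := fun e => G.len e.1
  len_pos := fun e => G.len_pos e.1

open scoped Classical in
/-- The (discrete) potential kernel: `jKer z y` is the function `f` with `f(z) = 0`
and `Δf = δ_y - δ_z` (when such a function exists; it is unique on a
connected graph). -/
noncomputable def jKer (z y : G.V) : G.V → ℝ :=
  if h : ∃ f : G.V → ℝ, f z = 0 ∧ ∀ w, G.dStar (G.d f) w =
      (if w = y then 1 else 0) - (if w = z then 1 else 0)
  then h.choose else 0

/-- Connectivity using only the edges in `S`. -/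
def ConnectedOn (S : Finset G.E) : Prop :=
  ∀ x y : G.V, Relation.ReflTransGen
    (fun a b => ∃ e ∈ S, (G.tail e = a ∧ G.head e = b) ∨ (G.tail e = b ∧ G.head e = a)) x y

/-- A spanning tree: a spanning connected edge set with `#V - 1` edges. -/
def IsSpanningTree (T : Finset G.E) : Prop :=
  G.ConnectedOn T ∧ T.card + 1 = Fintype.card G.V

/-- The weight `w(T) = Π_{e ∉ T} ℓ(e)` of a spanning tree. -/
noncomputable def wt (T : Finset G.E) : ℝ := ∏ e ∈ Finset.univ \ T, G.len e

open scoped Classical in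
/-- `w(G) = Σ_T w(T)`, summed over all spanning trees. -/
noncomputable def wG : ℝ := ∑ T : Finset G.E, if G.IsSpanningTree T then G.wt T else 0

open scoped Classical in
/-- The Foster coefficient `F(e) = (1/w(G)) Σ_{T : e ∉ T} w(T)`. -/
noncomputable def foster (e : G.E) : ℝ :=
  (1 / G.wG) * ∑ T : Finset G.E, if G.IsSpanningTree T ∧ e ∉ T then G.wt T else 0

open scoped Classical in
/-- The fundamental cycle `α_{T,e}`: the unique 1-cycle supported on `T ∪ {e}` taking
the value `1` on `e`; by convention it is `0` when no such cycle exists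
(e.g. when `e ∈ T`). -/
noncomputable def fundCycle (T : Finset G.E) (e : G.E) : G.E → ℝ :=
  if h : ∃ α : G.E → ℝ, G.IsCycle α ∧ α e = 1 ∧ ∀ f, f ∉ T → f ≠ e → α f = 0
  then h.choose else 0

end WGraph

namespace WGraph

/-- A circuit in `G`: a closed walk `x 0, ed 0, x 1, …, ed (n-1), x n = x 0` with
`n ≥ 1`, pairwise distinct edges and pairwise distinct vertices (except for the
coincidence `x 0 = x n`), each edge joining consecutive vertices in one of the two
possible directions. -/
def IsCircuit (G : WGraph) {n : ℕ} (x : Fin (n + 1) → G.V) (ed : Fin n → G.E) : Prop :=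
  0 < n ∧ Function.Injective ed ∧ x 0 = x (Fin.last n) ∧
  (∀ i j : Fin (n + 1), x i = x j →
    i = j ∨ (i = 0 ∧ j = Fin.last n) ∨ (i = Fin.last n ∧ j = 0)) ∧
  ∀ i : Fin n, (G.tail (ed i) = x i.castSucc ∧ G.head (ed i) = x i.succ) ∨
    (G.tail (ed i) = x i.succ ∧ G.head (ed i) = x i.castSucc)

end WGraph

namespace WGraph

section Aux

open Finset

variable {G : WGraph}

/-- Commensurability of the lengths of two edges. -/
def Rel (G : WGraph) (a b : G.E) : Prop := ∃ q : ℚ, G.len a = q * G.len b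

lemma rel_refl (a : G.E) : G.Rel a a := ⟨1, by simp⟩

lemma Rel.symm {a b : G.E} (h : G.Rel a b) : G.Rel b a := by
  obtain ⟨q, hq⟩ := h
  have hq0 : (q : ℝ) ≠ 0 := by
    intro h0
    have := G.len_pos a
    rw [hq, h0, zero_mul] at this
    exact lt_irrefl _ this
  refine ⟨q⁻¹, ?_⟩
  rw [hq]
  push_cast
  field_simp

lemma Rel.trans {a b c : G.E} (h1 : G.Rel a b) (h2 : G.Rel b c) : G.Rel a c := by
  obtain ⟨q, hq⟩ := h1; obtain ⟨r, hr⟩ := h2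
  exact ⟨q * r, by rw [hq, hr]; push_cast; ring⟩

lemma fiber_head (F : G.E → ℝ) (f : G.V → ℝ) :
    ∑ g, f (G.head g) * F g
      = ∑ x, f x * ∑ g ∈ Finset.univ.filter fun g => G.head g = x, F g := by
  rw [← Finset.sum_fiberwise Finset.univ G.head (fun g => f (G.head g) * F g)]
  refine Finset.sum_congr rfl fun x _ => ?_
  rw [Finset.mul_sum]
  refine Finset.sum_congr rfl fun g hg => ?_
  rw [Finset.mem_filter] at hg
  rw [hg.2]

lemma fiber_tail (F : G.E → ℝ) (f : G.V → ℝ) :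
    ∑ g, f (G.tail g) * F g
      = ∑ x, f x * ∑ g ∈ Finset.univ.filter fun g => G.tail g = x, F g := by
  rw [← Finset.sum_fiberwise Finset.univ G.tail (fun g => f (G.tail g) * F g)]
  refine Finset.sum_congr rfl fun x _ => ?_
  rw [Finset.mul_sum]
  refine Finset.sum_congr rfl fun g hg => ?_
  rw [Finset.mem_filter] at hg
  rw [hg.2]

lemma sum_by_parts (f : G.V → ℝ) (c : G.E → ℝ) :
    ∑ g, (f (G.head g) - f (G.tail g)) * c g = ∑ x, f x * G.dStar c x := by
  have : ∀ g, (f (G.head g) - f (G.tail g)) * c g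
      = f (G.head g) * c g - f (G.tail g) * c g := fun g => by ring
  simp_rw [this]
  rw [Finset.sum_sub_distrib, fiber_head, fiber_tail, ← Finset.sum_sub_distrib]
  refine Finset.sum_congr rfl fun x _ => ?_
  rw [dStar]
  ring

lemma sum_exact_cycle {β : G.E → ℝ} {f : G.V → ℝ}
    (hf : ∀ g, β g * G.len g = f (G.head g) - f (G.tail g))
    {c : G.E → ℝ} (hc : G.IsCycle c) :
    ∑ g, β g * c g * G.len g = 0 := by
  have h1 : ∑ g, β g * c g * G.len g = ∑ g, (f (G.head g) - f (G.tail g)) * c g := by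
    refine Finset.sum_congr rfl fun g _ => ?_
    rw [← hf g]; ring
  rw [h1, sum_by_parts]
  exact Finset.sum_eq_zero fun x _ => by rw [hc x, mul_zero]

lemma isCycle_cast {z : G.E → ℤ} (hz : G.IsCycleZ z) :
    G.IsCycle (fun g => (z g : ℝ)) := by
  intro v
  have h := hz v
  simp only [dStar, dStarZ] at h ⊢
  exact_mod_cast h

lemma dStarZ_single (e₀ : G.E) (v : G.V) :
    G.dStarZ (Pi.single e₀ 1) v =
      (if G.head e₀ = v then 1 else 0) - (if G.tail e₀ = v then 1 else 0) := by
  unfold dStarZ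
  rw [Finset.sum_pi_single', Finset.sum_pi_single']
  simp [Finset.mem_filter]

lemma fin_telescope {n : ℕ} (F : Fin (n + 1) → ℤ) :
    ∑ k : Fin n, (F k.succ - F k.castSucc) = F (Fin.last n) - F 0 := by
  rw [Finset.sum_sub_distrib]
  have h1 : ∑ j : Fin (n+1), F j = F 0 + ∑ k : Fin n, F k.succ := Fin.sum_univ_succ F
  have h2 : ∑ j : Fin (n+1), F j = (∑ k : Fin n, F k.castSucc) + F (Fin.last n) :=
    Fin.sum_univ_castSucc F
  have := h1.symm.trans h2
  linarith [this]

/-- Orientation sign of the `k`-th edge of a circuit. -/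
def ceps (G : WGraph) {n : ℕ} (x : Fin (n+1) → G.V) (ed : Fin n → G.E) (k : Fin n) : ℤ :=
  if G.tail (ed k) = x k.castSucc then 1 else -1

/-- The 1-chain attached to a circuit. -/
def cvec (G : WGraph) {n : ℕ} (x : Fin (n+1) → G.V) (ed : Fin n → G.E) : G.E → ℤ :=
  ∑ k, G.ceps x ed k • Pi.single (ed k) 1

lemma ceps_dStar {n : ℕ} {x : Fin (n+1) → G.V} {ed : Fin n → G.E}
    (hc : G.IsCircuit x ed) (k : Fin n) (v : G.V) :
    G.ceps x ed k * ((if G.head (ed k) = v then 1 else 0)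
        - (if G.tail (ed k) = v then 1 else 0)) =
      (if x k.succ = v then 1 else 0) - (if x k.castSucc = v then 1 else 0) := by
  obtain ⟨-, -, -, -, hor⟩ := hc
  rcases hor k with ⟨ht, hh⟩ | ⟨ht, hh⟩
  · unfold ceps
    rw [if_pos ht, ht, hh]
    ring
  · unfold ceps
    by_cases hxx : x k.succ = x k.castSucc
    · rw [ht, hh, hxx]
      split <;> split <;> simp_all
    · rw [if_neg (by rw [ht]; exact hxx), ht, hh]
      ring

lemma isCycleZ_cvec {n : ℕ} {x : Fin (n+1) → G.V} {ed : Fin n → G.E}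
    (hc : G.IsCircuit x ed) : G.IsCycleZ (G.cvec x ed) := by
  intro v
  have hx0 : x 0 = x (Fin.last n) := hc.2.2.1
  have : G.dStarZ (G.cvec x ed) v
      = ∑ k, G.ceps x ed k * ((if G.head (ed k) = v then 1 else 0)
          - (if G.tail (ed k) = v then 1 else 0)) := by
    show G.dStarZHom (G.cvec x ed) v = _
    unfold cvec
    rw [map_sum]
    rw [Finset.sum_apply]
    refine Finset.sum_congr rfl fun k _ => ?_
    rw [AddMonoidHom.map_zsmul]
    have : (G.dStarZHom (Pi.single (ed k) 1)) = G.dStarZ (Pi.single (ed k) 1) := rfl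
    rw [Pi.smul_apply, this, dStarZ_single, smul_eq_mul]
  rw [this]
  have htel := fin_telescope (fun j => if x j = v then (1:ℤ) else 0)
  calc ∑ k, G.ceps x ed k * ((if G.head (ed k) = v then 1 else 0)
          - (if G.tail (ed k) = v then 1 else 0))
      = ∑ k : Fin n, ((if x k.succ = v then (1:ℤ) else 0)
          - (if x k.castSucc = v then 1 else 0)) :=
        Finset.sum_congr rfl fun k _ => ceps_dStar ⟨hc.1, hc.2.1, hc.2.2.1, hc.2.2.2.1, hc.2.2.2.2⟩ k v
    _ = (if x (Fin.last n) = v then 1 else 0) - (if x 0 = v then 1 else 0) := htel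
    _ = 0 := by rw [hx0]; ring

lemma cvec_apply {n : ℕ} (x : Fin (n+1) → G.V) (ed : Fin n → G.E) (g : G.E) :
    G.cvec x ed g = ∑ k, G.ceps x ed k * (if g = ed k then 1 else 0) := by
  unfold cvec
  rw [Finset.sum_apply]
  refine Finset.sum_congr rfl fun k _ => ?_
  rw [Pi.smul_apply, Pi.single_apply, smul_eq_mul]

lemma cvec_ed {n : ℕ} {x : Fin (n+1) → G.V} {ed : Fin n → G.E}
    (hinj : Function.Injective ed) (m : Fin n) :
    G.cvec x ed (ed m) = G.ceps x ed m := by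
  rw [cvec_apply]
  rw [Finset.sum_eq_single m]
  · rw [if_pos rfl, mul_one]
  · intro k _ hk
    rw [if_neg (fun h => hk (hinj h.symm)), mul_zero]
  · intro h
    exact absurd (Finset.mem_univ m) h

lemma cvec_not_mem {n : ℕ} {x : Fin (n+1) → G.V} {ed : Fin n → G.E}
    {g : G.E} (hg : ∀ m, ed m ≠ g) : G.cvec x ed g = 0 := by
  rw [cvec_apply]
  exact Finset.sum_eq_zero fun k _ => by rw [if_neg (fun h => hg k h.symm), mul_zero]

lemma cvec_support {n : ℕ} {x : Fin (n+1) → G.V} {ed : Fin n → G.E}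
    {g : G.E} (h : G.cvec x ed g ≠ 0) : ∃ m, ed m = g := by
  by_contra hno
  push_neg at hno
  exact h (cvec_not_mem hno)

lemma sum_mul_cvec {n : ℕ} (x : Fin (n+1) → G.V) (ed : Fin n → G.E) (F : G.E → ℝ) :
    ∑ g, (G.cvec x ed g : ℝ) * F g = ∑ k, (G.ceps x ed k : ℝ) * F (ed k) := by
  have h : ∀ g, ((G.cvec x ed g : ℤ) : ℝ)
      = ∑ k, (G.ceps x ed k : ℝ) * (if g = ed k then 1 else 0) := by
    intro g
    rw [cvec_apply]
    push_cast
    rfl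
  simp_rw [h, Finset.sum_mul]
  rw [Finset.sum_comm]
  refine Finset.sum_congr rfl fun k _ => ?_
  have : ∀ g, (G.ceps x ed k : ℝ) * (if g = ed k then 1 else 0) * F g
      = if g = ed k then (G.ceps x ed k : ℝ) * F g else 0 := by
    intro g; split <;> simp_all
  simp_rw [this]
  rw [Finset.sum_ite_eq' Finset.univ (ed k) (fun g => (G.ceps x ed k : ℝ) * F g)]
  rw [if_pos (Finset.mem_univ _)]

end Aux

end WGraph

namespace WGraph

section Aux2

open Finset

variable {G : WGraph}

/-- Integral cycles as a subgroup. -/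
def cycZ (G : WGraph) : AddSubgroup (G.E → ℤ) where
  carrier := {α | G.IsCycleZ α}
  add_mem' := by
    intro a b ha hb
    intro x
    show G.dStarZHom (a + b) x = 0
    rw [map_add]
    have h1 : G.dStarZHom a = G.dStarZ a := rfl
    have h2 : G.dStarZHom b = G.dStarZ b := rfl
    rw [Pi.add_apply, h1, h2, ha x, hb x, add_zero]
  zero_mem' := by
    intro x
    show G.dStarZHom 0 x = 0
    rw [map_zero]
    rfl
  neg_mem' := by
    intro a ha
    intro x
    show G.dStarZHom (-a) x = 0
    rw [map_neg]
    have h1 : G.dStarZHom a = G.dStarZ a := rfl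
    rw [Pi.neg_apply, h1, ha x, neg_zero]

lemma jacRel_eq (G : WGraph) : G.jacRel = G.cycZ ⊔ G.imdZ := by
  unfold jacRel
  have h : {α : G.E → ℤ | G.IsCycleZ α ∨ G.IsExactZ α}
      = (G.cycZ : Set (G.E → ℤ)) ∪ (G.imdZ : Set (G.E → ℤ)) := by
    ext a
    simp only [Set.mem_setOf_eq, Set.mem_union, SetLike.mem_coe]
    rfl
  rw [h, AddSubgroup.closure_union, AddSubgroup.closure_eq, AddSubgroup.closure_eq]

lemma single_decomp (α : G.E → ℤ) :
    α = ∑ e, (α e) • (Pi.single e 1 : G.E → ℤ) := by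
  funext g
  rw [Finset.sum_apply]
  have : ∀ e, (α e • (Pi.single e 1 : G.E → ℤ)) g = if g = e then α e else 0 := by
    intro e
    rw [Pi.smul_apply, Pi.single_apply, smul_eq_mul]
    split <;> simp
  simp_rw [this]
  rw [Finset.sum_ite_eq Finset.univ g α, if_pos (Finset.mem_univ _)]

lemma finite_of_tor (G : WGraph)
    (h : ∀ e : G.E, ∃ N : ℤ, 0 < N ∧ N • (Pi.single e 1 : G.E → ℤ) ∈ G.jacRel) :
    Finite G.Jac := by
  let T : AddSubgroup (G.E → ℤ) :=
    { carrier := {α | ∃ N : ℤ, 0 < N ∧ N • α ∈ G.jacRel}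
      zero_mem' := ⟨1, one_pos, by simpa using G.jacRel.zero_mem⟩
      add_mem' := by
        rintro a b ⟨Na, hNa, ha⟩ ⟨Nb, hNb, hb⟩
        refine ⟨Na * Nb, mul_pos hNa hNb, ?_⟩
        have : (Na * Nb) • (a + b) = Nb • (Na • a) + Na • (Nb • b) := by
          rw [smul_add, smul_smul, smul_smul, mul_comm Nb Na]
        rw [this]
        exact G.jacRel.add_mem (G.jacRel.zsmul_mem ha Nb) (G.jacRel.zsmul_mem hb Na)
      neg_mem' := by
        rintro a ⟨Na, hNa, ha⟩
        refine ⟨Na, hNa, ?_⟩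
        rw [smul_neg]
        exact G.jacRel.neg_mem ha }
  have hall : ∀ α : G.E → ℤ, ∃ N : ℤ, 0 < N ∧ N • α ∈ G.jacRel := by
    intro α
    have hmem : α ∈ T := by
      have hrw := single_decomp α
      rw [hrw]
      exact AddSubgroup.sum_mem T fun e _ => AddSubgroup.zsmul_mem T (h e) (α e)
    exact hmem
  have fg : AddGroup.FG (G.E → ℤ) := Module.Finite.iff_addGroup_fg.mp inferInstance
  have fgJ : AddGroup.FG ((G.E → ℤ) ⧸ G.jacRel) :=
    AddGroup.fg_of_surjective (f := QuotientAddGroup.mk' G.jacRel)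
      (QuotientAddGroup.mk'_surjective G.jacRel)
  have tor : AddMonoid.IsTorsion ((G.E → ℤ) ⧸ G.jacRel) := by
    intro q
    obtain ⟨α, rfl⟩ := QuotientAddGroup.mk_surjective q
    obtain ⟨N, hN, hmem⟩ := hall α
    rw [isOfFinAddOrder_iff_nsmul_eq_zero]
    refine ⟨N.toNat, by omega, ?_⟩
    have h1 : N.toNat • (QuotientAddGroup.mk α : (G.E → ℤ) ⧸ G.jacRel)
        = QuotientAddGroup.mk (N.toNat • α) := rfl
    rw [h1]
    rw [QuotientAddGroup.eq_zero_iff]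
    have h2 : (N.toNat : ℤ) • α = N • α := by
      rw [Int.toNat_of_nonneg (le_of_lt hN)]
    rw [← h2] at hmem
    rwa [natCast_zsmul] at hmem
  have : Finite ((G.E → ℤ) ⧸ G.jacRel) := AddCommGroup.finite_of_fg_torsion _ tor
  exact this

lemma tor_of_finite (G : WGraph) (hfin : Finite G.Jac) (e : G.E) :
    ∃ N : ℤ, 0 < N ∧ N • (Pi.single e 1 : G.E → ℤ) ∈ G.jacRel := by
  have : Finite ((G.E → ℤ) ⧸ G.jacRel) := hfin
  set q : (G.E → ℤ) ⧸ G.jacRel := QuotientAddGroup.mk (Pi.single e 1) with hq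
  have hfo : IsOfFinAddOrder q := isOfFinAddOrder_of_finite q
  obtain ⟨n, hn, hzero⟩ := hfo.exists_nsmul_eq_zero
  refine ⟨(n : ℤ), by exact_mod_cast hn, ?_⟩
  have h1 : (n : ℤ) • (Pi.single e 1 : G.E → ℤ) = n • (Pi.single e 1 : G.E → ℤ) := natCast_zsmul _ _
  rw [h1]
  rw [← QuotientAddGroup.eq_zero_iff]
  have h2 : (QuotientAddGroup.mk (n • (Pi.single e 1 : G.E → ℤ)) : (G.E → ℤ) ⧸ G.jacRel)
      = n • q := rfl
  rw [h2]
  exact hzero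

lemma exists_tor_data (G : WGraph) (hfin : Finite G.Jac) (e : G.E) :
    ∃ (N : ℤ) (z : G.E → ℤ) (f : G.V → ℝ), 0 < N ∧ G.IsCycleZ z ∧
      ∀ g, (((N • (Pi.single e 1 : G.E → ℤ) - z) g : ℤ) : ℝ) = G.d f g := by
  obtain ⟨N, hN, hmem⟩ := tor_of_finite G hfin e
  rw [jacRel_eq] at hmem
  obtain ⟨z, hz, β, hβ, hzβ⟩ := AddSubgroup.mem_sup.mp hmem
  have hβ' : G.IsExactZ β := hβ
  obtain ⟨f, hf⟩ := hβ'
  refine ⟨N, z, f, hN, hz, ?_⟩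
  intro g
  have : N • (Pi.single e 1 : G.E → ℤ) - z = β := by
    rw [← hzβ]; abel
  rw [this]
  exact hf g

lemma tor_pair {e : G.E} {N : ℤ} {z : G.E → ℤ} {f : G.V → ℝ}
    (hf : ∀ g, (((N • (Pi.single e 1 : G.E → ℤ) - z) g : ℤ) : ℝ) = G.d f g)
    {c : G.E → ℝ} (hc : G.IsCycle c) :
    (N : ℝ) * (c e * G.len e) = ∑ g, (z g : ℝ) * c g * G.len g := by
  have hβ : ∀ g, (((N • (Pi.single e 1 : G.E → ℤ) - z) g : ℤ) : ℝ) * G.len g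
      = f (G.head g) - f (G.tail g) := by
    intro g
    rw [hf g]
    unfold d
    rw [div_mul_cancel₀ _ (ne_of_gt (G.len_pos g))]
  have h0 := sum_exact_cycle hβ hc
  have hexp : ∀ g, (((N • (Pi.single e 1 : G.E → ℤ) - z) g : ℤ) : ℝ) * c g * G.len g
      = (N : ℝ) * ((if g = e then 1 else 0) * (c g * G.len g)) - (z g : ℝ) * c g * G.len g := by
    intro g
    have h1 : ((N • (Pi.single e 1 : G.E → ℤ) - z) g : ℤ)
        = N * (if g = e then 1 else 0) - z g := by
      rw [Pi.sub_apply, Pi.smul_apply, Pi.single_apply, smul_eq_mul]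
    rw [h1]
    push_cast
    split <;> ring
  simp_rw [hexp] at h0
  rw [Finset.sum_sub_distrib, ← Finset.mul_sum] at h0
  have h2 : ∑ g, ((if g = e then (1:ℝ) else 0) * (c g * G.len g)) = c e * G.len e := by
    have : ∀ g, (if g = e then (1:ℝ) else 0) * (c g * G.len g)
        = if g = e then c g * G.len g else 0 := by intro g; split <;> simp
    simp_rw [this]
    rw [Finset.sum_ite_eq' Finset.univ e (fun g => c g * G.len g), if_pos (Finset.mem_univ _)]
  rw [h2] at h0
  linarith [h0]

end Aux2

end WGraph

namespace WGraph

section Aux3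

open Finset

variable {G : WGraph}

lemma isCycleZ_sum {ι : Type*} (s : Finset ι) (F : ι → (G.E → ℤ))
    (h : ∀ k ∈ s, G.IsCycleZ (F k)) : G.IsCycleZ (∑ k ∈ s, F k) := by
  intro v
  show G.dStarZHom (∑ k ∈ s, F k) v = 0
  rw [map_sum, Finset.sum_apply]
  refine Finset.sum_eq_zero fun k hk => ?_
  exact h k hk v

lemma isCycleZ_zsmul (c : ℤ) {α : G.E → ℤ} (h : G.IsCycleZ α) : G.IsCycleZ (c • α) := by
  intro v
  show G.dStarZHom (c • α) v = 0
  rw [AddMonoidHom.map_zsmul, Pi.smul_apply]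
  have : G.dStarZHom α = G.dStarZ α := rfl
  rw [this, h v, smul_zero]

lemma isCycle_sub {a b : G.E → ℝ} (ha : G.IsCycle a) (hb : G.IsCycle b) :
    G.IsCycle (fun g => a g - b g) := by
  intro v
  have h1 := ha v
  have h2 := hb v
  unfold dStar at h1 h2 ⊢
  rw [Finset.sum_sub_distrib, Finset.sum_sub_distrib]
  linarith

lemma isCycle_const_mul (r : ℝ) {a : G.E → ℝ} (ha : G.IsCycle a) :
    G.IsCycle (fun g => r * a g) := by
  intro v
  have h1 := ha v
  unfold dStar at h1 ⊢
  rw [← Finset.mul_sum, ← Finset.mul_sum, ← mul_sub, h1, mul_zero]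

lemma forward_dir (G : WGraph) (hfin : Finite G.Jac) :
    ∀ (n : ℕ) (x : Fin (n + 1) → G.V) (ed : Fin n → G.E), G.IsCircuit x ed →
      ∀ i j : Fin n, ∃ q : ℚ, G.len (ed i) = q * G.len (ed j) := by
  classical
  have key : ∀ e : G.E, ∃ (N : ℤ) (z : G.E → ℤ) (f : G.V → ℝ), 0 < N ∧ G.IsCycleZ z ∧
      ∀ g, (((N • (Pi.single e 1 : G.E → ℤ) - z) g : ℤ) : ℝ) = G.d f g :=
    fun e => exists_tor_data G hfin e
  choose N z f hN hz hf using key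
  have pair : ∀ e : G.E, ∀ c : G.E → ℝ, G.IsCycle c →
      (N e : ℝ) * (c e * G.len e) = ∑ g, (z e g : ℝ) * c g * G.len g :=
    fun e c hc => tor_pair (hf e) hc
  have zcyc : ∀ e, G.IsCycle (fun g => (z e g : ℝ)) := fun e => isCycle_cast (hz e)
  have sym : ∀ a b : G.E, (N a : ℝ) * ((z b a : ℝ) * G.len a)
      = (N b : ℝ) * ((z a b : ℝ) * G.len b) := by
    intro a b
    have h1 := pair a _ (zcyc b)
    have h2 := pair b _ (zcyc a)
    have h3 : ∑ g, (z a g : ℝ) * (z b g : ℝ) * G.len g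
        = ∑ g, (z b g : ℝ) * (z a g : ℝ) * G.len g :=
      Finset.sum_congr rfl fun g _ => by ring
    rw [h1, h3, ← h2]
  have vanish : ∀ a b : G.E, ¬ G.Rel a b → z b a = 0 := by
    intro a b hR
    by_contra hzba
    apply hR
    have h := sym a b
    have hNa : ((N a : ℤ) : ℝ) ≠ 0 := Int.cast_ne_zero.mpr (by have := hN a; omega)
    have hNb : ((N b : ℤ) : ℝ) ≠ 0 := Int.cast_ne_zero.mpr (by have := hN b; omega)
    have hzba' : ((z b a : ℤ) : ℝ) ≠ 0 := Int.cast_ne_zero.mpr hzba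
    refine ⟨((N b * z a b : ℤ) : ℚ) / ((N a * z b a : ℤ) : ℚ), ?_⟩
    have hden : ((N a * z b a : ℤ) : ℝ) ≠ 0 := by
      push_cast
      exact mul_ne_zero hNa hzba'
    have hcast : ((((N b * z a b : ℤ) : ℚ) / ((N a * z b a : ℤ) : ℚ) : ℚ) : ℝ)
        = ((N b * z a b : ℤ) : ℝ) / ((N a * z b a : ℤ) : ℝ) := by
      push_cast
      ring
    rw [hcast, div_mul_eq_mul_div, eq_div_iff hden]
    push_cast
    nlinarith [h]
  intro n x ed hc i j
  by_cases hij : i = j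
  · exact ⟨1, by rw [hij]; norm_num⟩
  have hn2 : 2 ≤ n := by
    by_contra hn
    push_neg at hn
    have hi := i.isLt
    have hj := j.isLt
    exact hij (Fin.ext (by omega))
  by_contra hR
  have hRij : ¬ G.Rel (ed i) (ed j) := hR
  have hxinj := hc.2.2.2.1
  set ε := G.ceps x ed with hε
  set γ := G.cvec x ed with hγ
  set Mtot : ℤ := ∏ g, N g with hMtot
  have hMtotpos : 0 < Mtot := Finset.prod_pos (fun g _ => hN g)
  set Mg : G.E → ℤ := fun g0 => ∏ g ∈ Finset.univ.erase g0, N g with hMg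
  have hMsplit : ∀ g0, N g0 * Mg g0 = Mtot :=
    fun g0 => Finset.mul_prod_erase Finset.univ N (Finset.mem_univ g0)
  set U : G.E → ℤ := ∑ k, ε k • (Mg (ed k) • z (ed k)) with hU
  have hpairU : ∀ c : G.E → ℝ, G.IsCycle c →
      ∑ g, (U g : ℝ) * c g * G.len g
        = (Mtot : ℝ) * ∑ k, (ε k : ℝ) * (c (ed k) * G.len (ed k)) := by
    intro c hcy
    have h1 : ∀ g, ((U g : ℤ) : ℝ)
        = ∑ k, (ε k : ℝ) * ((Mg (ed k) : ℝ) * (z (ed k) g : ℝ)) := by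
      intro g
      rw [hU, Finset.sum_apply]
      push_cast
      refine Finset.sum_congr rfl fun k _ => ?_
      rw [Pi.smul_apply, Pi.smul_apply, smul_eq_mul, smul_eq_mul]
      push_cast
      ring
    simp_rw [h1, Finset.sum_mul]
    rw [Finset.sum_comm]
    have h2 : ∀ k, ∑ g, (ε k : ℝ) * ((Mg (ed k) : ℝ) * (z (ed k) g : ℝ)) * c g * G.len g
        = (Mtot : ℝ) * ((ε k : ℝ) * (c (ed k) * G.len (ed k))) := by
      intro k
      have ha : ∑ g, (ε k : ℝ) * ((Mg (ed k) : ℝ) * (z (ed k) g : ℝ)) * c g * G.len g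
          = (ε k : ℝ) * (Mg (ed k) : ℝ) * ∑ g, (z (ed k) g : ℝ) * c g * G.len g := by
        rw [Finset.mul_sum]
        refine Finset.sum_congr rfl fun g _ => by ring
      rw [ha, ← pair (ed k) c hcy]
      have hMk := hMsplit (ed k)
      have hcastM : (N (ed k) : ℝ) * (Mg (ed k) : ℝ) = (Mtot : ℝ) := by
        rw [← Int.cast_mul, hMk]
      linear_combination ((ε k : ℝ) * (c (ed k) * G.len (ed k))) * hcastM
    rw [Finset.sum_congr rfl (fun k _ => h2 k), ← Finset.mul_sum]
  have hγpair : ∀ c : G.E → ℝ, G.IsCycle c →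
      ∑ g, (γ g : ℝ) * c g * G.len g = ∑ k, (ε k : ℝ) * (c (ed k) * G.len (ed k)) := by
    intro c _
    have h1 : ∀ g, (γ g : ℝ) * c g * G.len g = (γ g : ℝ) * (c g * G.len g) :=
      fun g => by ring
    simp_rw [h1]
    rw [hγ, sum_mul_cvec x ed (fun g => c g * G.len g)]
  have hUcycZ : G.IsCycleZ U := by
    rw [hU]
    exact isCycleZ_sum _ _ fun k _ => isCycleZ_zsmul _ (isCycleZ_zsmul _ (hz (ed k)))
  have hγcycZ : G.IsCycleZ γ := isCycleZ_cvec hc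
  set c₀ : G.E → ℝ := fun g => (U g : ℝ) - (Mtot : ℝ) * (γ g : ℝ) with hc₀def
  have hc₀ : G.IsCycle c₀ :=
    isCycle_sub (isCycle_cast hUcycZ) (isCycle_const_mul _ (isCycle_cast hγcycZ))
  have hzero : ∀ g, c₀ g = 0 := by
    have hOrth : ∑ g, c₀ g * c₀ g * G.len g = 0 := by
      have e1 := hpairU _ hc₀
      have e2 := hγpair _ hc₀
      have e3 : ∑ g, c₀ g * c₀ g * G.len g
          = (∑ g, (U g : ℝ) * c₀ g * G.len g)
            - (Mtot : ℝ) * ∑ g, (γ g : ℝ) * c₀ g * G.len g := by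
        rw [Finset.mul_sum, ← Finset.sum_sub_distrib]
        refine Finset.sum_congr rfl fun g _ => ?_
        rw [hc₀def]
        ring
      rw [e3, e1, e2]
      ring
    intro g
    have hterm : ∀ g ∈ Finset.univ (α := G.E), 0 ≤ c₀ g * c₀ g * G.len g :=
      fun g _ => mul_nonneg (mul_self_nonneg _) (le_of_lt (G.len_pos g))
    have := (Finset.sum_eq_zero_iff_of_nonneg hterm).mp hOrth g (Finset.mem_univ g)
    rcases mul_eq_zero.mp this with h | h
    · exact mul_self_eq_zero.mp h
    · exact absurd h (ne_of_gt (G.len_pos g))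
  have hUeq : ∀ g, U g = Mtot * γ g := by
    intro g
    have h3 : (U g : ℝ) - (Mtot : ℝ) * (γ g : ℝ) = 0 := hzero g
    have h2 : ((U g : ℤ) : ℝ) = ((Mtot * γ g : ℤ) : ℝ) := by
      push_cast
      linarith
    exact_mod_cast h2
  set S : Finset (Fin n) := Finset.univ.filter (fun k => G.Rel (ed k) (ed i)) with hS
  have hmemS : ∀ k, k ∈ S ↔ G.Rel (ed k) (ed i) := by
    intro k
    rw [hS, Finset.mem_filter]
    simp
  set u : G.E → ℤ := ∑ k ∈ S, ε k • (Mg (ed k) • z (ed k)) with hu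
  have hucyc : G.IsCycleZ u := by
    rw [hu]
    exact isCycleZ_sum _ _ fun k _ => isCycleZ_zsmul _ (isCycleZ_zsmul _ (hz (ed k)))
  set γS : G.E → ℤ := ∑ k ∈ S, ε k • Pi.single (ed k) 1 with hγS
  have hγS_apply : ∀ g, γS g = ∑ k ∈ S, ε k * (if g = ed k then 1 else 0) := by
    intro g
    rw [hγS, Finset.sum_apply]
    refine Finset.sum_congr rfl fun k _ => ?_
    rw [Pi.smul_apply, Pi.single_apply, smul_eq_mul]
  have hsplit : ∀ g, U g = u g + ∑ k ∈ Sᶜ, (ε k • (Mg (ed k) • z (ed k))) g := by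
    intro g
    rw [hU, hu, Finset.sum_apply, Finset.sum_apply]
    rw [← Finset.sum_add_sum_compl S (fun k => (ε k • (Mg (ed k) • z (ed k))) g)]
  have hkeyval : ∀ g, u g = Mtot * γS g := by
    intro g
    by_cases hg : G.Rel g (ed i)
    · have hcompl : ∀ k ∈ Sᶜ, (ε k • (Mg (ed k) • z (ed k))) g = 0 := by
        intro k hk
        rw [Finset.mem_compl, hmemS] at hk
        have hzk : z (ed k) g = 0 := by
          apply vanish g (ed k)
          intro hgk
          exact hk (Rel.trans (Rel.symm hgk) hg)
        rw [Pi.smul_apply, Pi.smul_apply, hzk, smul_zero, smul_zero]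
      have h2 : u g = U g := by
        rw [hsplit g, Finset.sum_eq_zero hcompl, add_zero]
      have h3 : γ g = γS g := by
        rw [hγ, cvec_apply, hγS_apply]
        rw [← Finset.sum_add_sum_compl S (fun k => G.ceps x ed k * (if g = ed k then 1 else 0))]
        have hz3 : ∀ k ∈ Sᶜ, G.ceps x ed k * (if g = ed k then 1 else 0) = 0 := by
          intro k hk
          rw [Finset.mem_compl, hmemS] at hk
          rw [if_neg, mul_zero]
          intro hge
          exact hk (by rw [← hge]; exact hg)
        rw [Finset.sum_eq_zero hz3, add_zero]
      rw [h2, hUeq g, h3]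
    · have h1 : u g = 0 := by
        rw [hu, Finset.sum_apply]
        refine Finset.sum_eq_zero fun k hk => ?_
        rw [hmemS] at hk
        have hzk : z (ed k) g = 0 := by
          apply vanish g (ed k)
          intro hgk
          exact hg (Rel.trans hgk hk)
        rw [Pi.smul_apply, Pi.smul_apply, hzk, smul_zero, smul_zero]
      have h2 : γS g = 0 := by
        rw [hγS_apply]
        refine Finset.sum_eq_zero fun k hk => ?_
        rw [hmemS] at hk
        rw [if_neg, mul_zero]
        intro hge
        exact hg (by rw [hge]; exact hk)
      rw [h1, h2, mul_zero]
  have hiS : i ∈ S := (hmemS i).mpr (rel_refl _)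
  have hjS : j ∉ S := by
    rw [hmemS]
    intro hmem
    exact hRij (Rel.symm hmem)
  have hnpos : 0 < n := hc.1
  set nxt : Fin n → Fin n :=
    fun k => if h : (k : ℕ) + 1 < n then ⟨(k : ℕ) + 1, h⟩ else ⟨0, hnpos⟩ with hnxt
  have hnxtval : ∀ k : Fin n, ((nxt k : Fin n) : ℕ) = ((k : ℕ) + 1) % n := by
    intro k
    by_cases h : (k : ℕ) + 1 < n
    · simp only [hnxt, dif_pos h]
      exact (Nat.mod_eq_of_lt h).symm
    · simp only [hnxt, dif_neg h]
      have hk := k.isLt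
      have hkn : (k : ℕ) + 1 = n := by omega
      simp [hkn]
  have hiter : ∀ m : ℕ, ((nxt^[m]) i : ℕ) = ((i : ℕ) + m) % n := by
    intro m
    induction m with
    | zero => simp [Nat.mod_eq_of_lt i.isLt]
    | succ m ih =>
      rw [Function.iterate_succ_apply', hnxtval, ih]
      conv_rhs => rw [show (i : ℕ) + (m + 1) = ((i : ℕ) + m) + 1 by ring]
      rw [Nat.add_mod ((i : ℕ) + m) 1 n]
      rw [Nat.mod_eq_of_lt (show 1 < n by omega)]
  have hexm : ∃ m : ℕ, (nxt^[m]) i = j := by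
    refine ⟨n + (j : ℕ) - (i : ℕ), ?_⟩
    apply Fin.ext
    rw [hiter]
    have hi := i.isLt
    have hj := j.isLt
    have h1 : (i : ℕ) + (n + (j : ℕ) - (i : ℕ)) = (j : ℕ) + n := by omega
    rw [h1]
    rw [Nat.add_mod_right]
    exact Nat.mod_eq_of_lt hj
  have hclosed : ¬ (∀ k ∈ S, nxt k ∈ S) := by
    intro hcl
    have hall : ∀ m : ℕ, (nxt^[m]) i ∈ S := by
      intro m
      induction m with
      | zero => exact hiS
      | succ m ih =>
        rw [Function.iterate_succ_apply']
        exact hcl _ ih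
    obtain ⟨m, hm⟩ := hexm
    exact hjS (hm ▸ hall m)
  push_neg at hclosed
  obtain ⟨k₀, hk₀S, hk₀n⟩ := hclosed
  set v := x k₀.succ with hv
  have hdse : G.dStarZ γS v = 1 := by
    have hexp : G.dStarZ γS v
        = ∑ k ∈ S, ε k * ((if G.head (ed k) = v then 1 else 0)
            - (if G.tail (ed k) = v then 1 else 0)) := by
      show G.dStarZHom γS v = _
      rw [hγS, map_sum, Finset.sum_apply]
      refine Finset.sum_congr rfl fun k _ => ?_
      rw [AddMonoidHom.map_zsmul, Pi.smul_apply, smul_eq_mul]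
      congr 1
      exact dStarZ_single (ed k) v
    rw [hexp]
    rw [Finset.sum_congr rfl (fun k (_ : k ∈ S) => ceps_dStar hc k v)]
    rw [Finset.sum_sub_distrib]
    have h1 : ∑ k ∈ S, (if x k.succ = v then (1 : ℤ) else 0) = 1 := by
      have hcg : ∀ k ∈ S, (if x k.succ = v then (1 : ℤ) else 0)
          = if k = k₀ then 1 else 0 := by
        intro k _
        by_cases hkk : k = k₀
        · rw [if_pos hkk, hkk, if_pos (show x k₀.succ = v from rfl)]
        · rw [if_neg hkk, if_neg]
          intro hxe
          rw [hv] at hxe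
          rcases hxinj _ _ hxe with heq | ⟨h0, _⟩ | ⟨_, h0⟩
          · exact hkk (Fin.succ_injective _ heq)
          · exact absurd h0 (Fin.succ_ne_zero k)
          · exact absurd h0 (Fin.succ_ne_zero k₀)
      rw [Finset.sum_congr rfl hcg]
      rw [Finset.sum_ite_eq' S k₀ (fun _ => (1 : ℤ))]
      rw [if_pos hk₀S]
    have h2 : ∑ k ∈ S, (if x k.castSucc = v then (1 : ℤ) else 0) = 0 := by
      refine Finset.sum_eq_zero fun k hk => ?_
      rw [if_neg]
      intro hxe
      rw [hv] at hxe
      rcases hxinj _ _ hxe with heq | ⟨h0, hl⟩ | ⟨hl, h0⟩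
      · have hval : (k : ℕ) = (k₀ : ℕ) + 1 := by
          have hvv := congrArg Fin.val heq
          simpa using hvv
        have hlt : (k₀ : ℕ) + 1 < n := by
          have := k.isLt
          omega
        have hnk : nxt k₀ = k := by
          apply Fin.ext
          rw [hnxtval]
          rw [Nat.mod_eq_of_lt hlt]
          omega
        exact hk₀n (hnk ▸ hk)
      · have hk0 : (k : ℕ) = 0 := by
          have hvv := congrArg Fin.val h0
          simpa using hvv
        have hkl : (k₀ : ℕ) + 1 = n + 1 - 1 := by
          have hvv := congrArg Fin.val hl
          simpa using hvv
        have hnk : nxt k₀ = k := by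
          apply Fin.ext
          rw [hnxtval]
          have : ((k₀ : ℕ) + 1) = n := by omega
          rw [this]
          simp [hk0]
        exact hk₀n (hnk ▸ hk)
      · exact absurd h0 (Fin.succ_ne_zero k₀)
    rw [h1, h2]
    omega
  have h0 : G.dStarZ u v = 0 := hucyc v
  have hufin : u = Mtot • γS := by
    funext g
    rw [hkeyval g, Pi.smul_apply, smul_eq_mul]
  rw [hufin] at h0
  have hms : G.dStarZ (Mtot • γS) v = Mtot * G.dStarZ γS v := by
    show G.dStarZHom (Mtot • γS) v = _
    rw [AddMonoidHom.map_zsmul, Pi.smul_apply, smul_eq_mul]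
    rfl
  rw [hms, hdse, mul_one] at h0
  omega

end Aux3

end WGraph

namespace WGraph

/-- Walks in a weighted graph. -/
inductive Walk (G : WGraph) : G.V → G.V → Type where
  | nil (v : G.V) : Walk G v v
  | cons {u v w : G.V} (g : G.E) (dir : Bool)
      (h : cond dir (G.tail g = u ∧ G.head g = v) (G.head g = u ∧ G.tail g = v))
      (p : Walk G v w) : Walk G u w

namespace Walk

variable {G : WGraph}

def len : {u v : G.V} → Walk G u v → ℕ
  | _, _, .nil _ => 0
  | _, _, .cons _ _ _ p => p.len + 1

noncomputable def mu (β : G.E → ℝ) : {u v : G.V} → Walk G u v → ℝ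
  | _, _, .nil _ => 0
  | _, _, .cons g dir _ p => (cond dir (1 : ℝ) (-1)) * (β g * G.len g) + mu β p

def append : {u v w : G.V} → Walk G u v → Walk G v w → Walk G u w
  | _, _, _, .nil _, q => q
  | _, _, _, .cons g dir h p, q => .cons g dir h (append p q)

def reverse : {u v : G.V} → Walk G u v → Walk G v u
  | _, _, .nil v => .nil v
  | _, _, .cons g dir h p =>
      append (reverse p) (.cons g (!dir) (by cases dir <;> exact ⟨h.2, h.1⟩) (.nil _))

lemma mu_append (β : G.E → ℝ) : ∀ {u v w : G.V} (p : Walk G u v) (q : Walk G v w),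
    mu β (append p q) = mu β p + mu β q := by
  intro u v w p q
  induction p with
  | nil => show mu β q = 0 + mu β q; ring
  | cons g dir h p ih =>
      show (cond dir (1:ℝ) (-1)) * (β g * G.len g) + mu β (append p q) = _
      rw [ih]
      show _ = (cond dir (1:ℝ) (-1)) * (β g * G.len g) + mu β p + mu β q
      ring

lemma mu_reverse (β : G.E → ℝ) : ∀ {u v : G.V} (p : Walk G u v),
    mu β (reverse p) = - mu β p := by
  intro u v p
  induction p with
  | nil => show (0:ℝ) = -0; ring
  | cons g dir h p ih =>
      show mu β (append (reverse p) _) = _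
      rw [mu_append, ih]
      show -mu β p + ((cond (!dir) (1:ℝ) (-1)) * (β g * G.len g) + 0) = _
      have hsign : (cond (!dir) (1:ℝ) (-1)) = -(cond dir (1:ℝ) (-1)) := by
        cases dir <;> norm_num
      rw [hsign]
      show _ = -((cond dir (1:ℝ) (-1)) * (β g * G.len g) + mu β p)
      ring

lemma len_append : ∀ {u v w : G.V} (p : Walk G u v) (q : Walk G v w),
    (append p q).len = p.len + q.len := by
  intro u v w p q
  induction p with
  | nil => show q.len = 0 + q.len; ring
  | cons g dir h p ih =>
      show (append p q).len + 1 = (p.len + 1) + q.len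
      rw [ih]; ring

lemma exists_walk (hG : G.Connected) (u v : G.V) : Nonempty (Walk G u v) := by
  have h := hG u v
  induction h with
  | refl => exact ⟨.nil u⟩
  | tail hab hbc ih =>
      obtain ⟨p⟩ := ih
      obtain ⟨e, he⟩ := hbc
      rcases he with ⟨ht, hh⟩ | ⟨ht, hh⟩
      · exact ⟨p.append (.cons e true ⟨ht, hh⟩ (.nil _))⟩
      · exact ⟨p.append (.cons e false ⟨hh, ht⟩ (.nil _))⟩

def vtx : {u v : G.V} → Walk G u v → ℕ → G.V
  | u, _, .nil _, _ => u
  | u, _, .cons _ _ _ _, 0 => u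
  | _, _, .cons _ _ _ p, k+1 => vtx p k

lemma vtx_zero : ∀ {u v : G.V} (w : Walk G u v), w.vtx 0 = u := by
  intro u v w
  cases w <;> rfl

lemma vtx_past : ∀ {u v : G.V} (w : Walk G u v) (k : ℕ), w.len ≤ k → w.vtx k = v := by
  intro u v w
  induction w with
  | nil => intro k _; rfl
  | cons g dir h p ih =>
      intro k hk
      match k with
      | 0 => exact absurd hk (by simp [len])
      | k+1 =>
          show p.vtx k = _
          exact ih k (by simpa [len] using hk)

def edgAt : {u v : G.V} → (w : Walk G u v) → (k : ℕ) → k < w.len → G.E × Bool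
  | _, _, .cons g dir _ _, 0, _ => (g, dir)
  | _, _, .cons _ _ _ p, k+1, h => edgAt p k (by simpa [len] using h)
  | _, _, .nil _, k, h => absurd h (by simp [len])

lemma edgAt_spec : ∀ {u v : G.V} (w : Walk G u v) (k : ℕ) (hk : k < w.len),
    ((w.edgAt k hk).2 = true ∧ G.tail (w.edgAt k hk).1 = w.vtx k
        ∧ G.head (w.edgAt k hk).1 = w.vtx (k+1))
    ∨ ((w.edgAt k hk).2 = false ∧ G.head (w.edgAt k hk).1 = w.vtx k
        ∧ G.tail (w.edgAt k hk).1 = w.vtx (k+1)) := by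
  intro u v w
  induction w with
  | nil => intro k hk; exact absurd hk (by simp [len])
  | @cons u v w g dir h p ih =>
      intro k hk
      match k with
      | 0 =>
          rw [show (Walk.cons g dir h p).vtx (0+1) = v from vtx_zero p]
          cases dir
          · exact Or.inr ⟨rfl, h.1, h.2⟩
          · exact Or.inl ⟨rfl, h.1, h.2⟩
      | k+1 => exact ih k (by simpa [len] using hk)

lemma mu_eq_sum (β : G.E → ℝ) : ∀ {u v : G.V} (w : Walk G u v),
    mu β w = ∑ k : Fin w.len,
      (cond (w.edgAt k k.isLt).2 (1:ℝ) (-1)) * (β (w.edgAt k k.isLt).1 * G.len (w.edgAt k k.isLt).1) := by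
  intro u v w
  induction w with
  | nil => show (0:ℝ) = ∑ k : Fin 0, _; simp
  | cons g dir h p ih =>
      show (cond dir (1:ℝ) (-1)) * (β g * G.len g) + mu β p = _
      rw [ih]
      show _ = ∑ k : Fin (p.len + 1),
        (cond ((Walk.cons g dir h p).edgAt k k.isLt).2 (1:ℝ) (-1))
          * (β ((Walk.cons g dir h p).edgAt k k.isLt).1
            * G.len ((Walk.cons g dir h p).edgAt k k.isLt).1)
      rw [Fin.sum_univ_succ]
      rfl

lemma split : ∀ {u v : G.V} (w : Walk G u v) (k : ℕ), k ≤ w.len →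
    ∃ (w1 : Walk G u (w.vtx k)) (w2 : Walk G (w.vtx k) v),
      w1.len = k ∧ w2.len = w.len - k ∧ (∀ i, i ≤ k → w1.vtx i = w.vtx i) ∧
      (∀ β : G.E → ℝ, mu β w = mu β w1 + mu β w2) := by
  intro u v w
  induction w with
  | nil =>
      intro k hk
      have hk0 : k = 0 := by simpa [len] using hk
      subst hk0
      exact ⟨.nil _, .nil _, rfl, rfl, fun i _ => rfl, fun β => by show (0:ℝ) = 0 + 0; ring⟩
  | @cons u v w g dir h p ih =>
      intro k hk
      match k with
      | 0 =>
          refine ⟨.nil u, .cons g dir h p, rfl, ?_, ?_, ?_⟩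
          · show p.len + 1 = (p.len + 1) - 0
            omega
          · intro i hi
            have hi0 : i = 0 := by omega
            subst hi0
            rfl
          · intro β
            show mu β (.cons g dir h p) = 0 + mu β (.cons g dir h p)
            ring
      | k+1 =>
          obtain ⟨p1, p2, hl1, hl2, hv1, hmu⟩ := ih k (by simpa [len] using hk)
          refine ⟨.cons g dir h p1, p2, ?_, ?_, ?_, ?_⟩
          · show p1.len + 1 = k + 1
            omega
          · show p2.len = (p.len + 1) - (k + 1)
            omega
          · intro i hi
            match i with
            | 0 => rfl
            | i+1 =>
                show p1.vtx i = p.vtx i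
                exact hv1 i (by omega)
          · intro β
            show (cond dir (1:ℝ) (-1)) * (β g * G.len g) + mu β p
                = ((cond dir (1:ℝ) (-1)) * (β g * G.len g) + mu β p1) + mu β p2
            rw [hmu β]
            ring

end Walk

end WGraph

namespace WGraph

namespace Walk

variable {G : WGraph}

def castStart {p q r : G.V} (h : p = q) (w : Walk G p r) : Walk G q r := h ▸ w

lemma mu_castStart (β : G.E → ℝ) {p q r : G.V} (h : p = q) (w : Walk G p r) :
    mu β (castStart h w) = mu β w := by subst h; rfl

lemma len_castStart {p q r : G.V} (h : p = q) (w : Walk G p r) :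
    (castStart h w).len = w.len := by subst h; rfl

lemma eq_of_len_zero : ∀ {x y : G.V} (p : Walk G x y), p.len = 0 → x = y := by
  intro x y p h
  cases p with
  | nil => rfl
  | cons g dir hh p => exact absurd h (by simp [len])

lemma mu_of_len_zero (β : G.E → ℝ) : ∀ {x y : G.V} (p : Walk G x y), p.len = 0 → mu β p = 0 := by
  intro x y p h
  cases p with
  | nil => rfl
  | cons g dir hh p => exact absurd h (by simp [len])

end Walk

section Closed

open Walk

variable {G : WGraph}

lemma mu_closed (β : G.E → ℝ)
    (hβ : ∀ (m : ℕ) (x : Fin (m+1) → G.V) (ed : Fin m → G.E), G.IsCircuit x ed →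
      ∑ k : Fin m, (G.ceps x ed k : ℝ) * (β (ed k) * G.len (ed k)) = 0) :
    ∀ (n : ℕ) {u : G.V} (w : Walk G u u), w.len = n → mu β w = 0 := by
  intro n
  induction n using Nat.strong_induction_on with
  | _ n IH =>
  intro u w hw
  subst hw
  rcases Nat.eq_zero_or_pos w.len with h0 | hpos
  · exact mu_of_len_zero β w h0
  by_cases hrepe : ∃ a b : ℕ, a < b ∧ b ≤ w.len ∧ ¬(a = 0 ∧ b = w.len) ∧ w.vtx a = w.vtx b
  · obtain ⟨a, b, hab, hbn, hne, heq⟩ := hrepe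
    obtain ⟨w1, w2, hl1, hl2, hv1, hmu⟩ := split w b (by omega)
    obtain ⟨w11, w12, hl11, hl12, hv11, hmu1⟩ := split w1 a (by omega)
    have hva : w1.vtx a = w.vtx b := by
      rw [hv1 a (by omega), heq]
    have h12 : mu β w12 = 0 := by
      have hgen : ∀ p q : G.V, p = q → ∀ w' : Walk G p q, w'.len = b - a → mu β w' = 0 := by
        intro p q hpq
        subst hpq
        intro w' hw'
        have hba : b - a < w.len := by omega
        exact IH (b - a) hba w' hw'
      exact hgen _ _ hva w12 (by omega)
    have hbig : mu β (w11.append (castStart hva.symm w2)) = 0 := by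
      apply IH (a + (w.len - b)) (by omega)
      rw [len_append, len_castStart]
      omega
    have hmw : mu β w = mu β w1 + mu β w2 := hmu β
    have hmw1 : mu β w1 = mu β w11 + mu β w12 := hmu1 β
    have happ : mu β (w11.append (castStart hva.symm w2)) = mu β w11 + mu β w2 := by
      rw [mu_append, mu_castStart]
    linarith [hmw, hmw1, happ, h12, hbig]
  push_neg at hrepe
  have hrep' : ∀ a b : ℕ, a < b → b ≤ w.len → ¬(a = 0 ∧ b = w.len) → w.vtx a ≠ w.vtx b :=
    fun a b h1 h2 h3 => hrepe a b h1 h2 (fun ha hb => h3 ⟨ha, hb⟩)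
  rcases Nat.lt_or_ge w.len 2 with hn1 | hn2
  · -- length 1 : a loop
    have hl1 : w.len = 1 := by omega
    have hv0 : w.vtx 0 = u := vtx_zero w
    have hv1 : w.vtx 1 = u := vtx_past w 1 (by omega)
    have hk0 : (0:ℕ) < w.len := by omega
    set g := (w.edgAt 0 hk0).1 with hg
    have ht : G.tail g = u := by
      rcases edgAt_spec w 0 hk0 with ⟨_, h1, _⟩ | ⟨_, _, h2⟩
      · rw [h1, hv0]
      · rw [h2]
        exact hv1
    have hh' : G.head g = u := by
      rcases edgAt_spec w 0 hk0 with ⟨_, _, h2⟩ | ⟨_, h1, _⟩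
      · rw [h2]
        exact hv1
      · rw [h1, hv0]
    set x₁ : Fin 2 → G.V := fun _ => u with hx₁
    set ed₁ : Fin 1 → G.E := fun _ => g with hed₁
    have hc₁ : G.IsCircuit x₁ ed₁ := by
      refine ⟨Nat.one_pos, fun a b _ => Subsingleton.elim a b, rfl, ?_, ?_⟩
      · intro i j hij
        clear hij
        revert i j
        decide
      · intro k
        exact Or.inl ⟨ht, hh'⟩
    have hsum := hβ 1 x₁ ed₁ hc₁
    rw [Fin.sum_univ_one] at hsum
    have hceps : G.ceps x₁ ed₁ 0 = 1 := if_pos ht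
    rw [hceps] at hsum
    push_cast at hsum
    have hbl : β g * G.len g = 0 := by linarith
    rw [mu_eq_sum β w, ← Fin.sum_congr' _ hl1.symm, Fin.sum_univ_one]
    show cond ((w.edgAt 0 hk0).2) (1:ℝ) (-1) * (β g * G.len g) = 0
    cases (w.edgAt 0 hk0).2
    · rw [Bool.cond_false, hbl]
      ring
    · rw [Bool.cond_true, hbl]
      ring
  · -- no interior repeats, length ≥ 2 : it is a circuit
    set x₁ : Fin (w.len + 1) → G.V := fun k => w.vtx k with hx₁
    set ed₁ : Fin w.len → G.E := fun k => (w.edgAt k k.isLt).1 with hed₁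
    set dd : Fin w.len → Bool := fun k => (w.edgAt k k.isLt).2 with hdd
    have hspec : ∀ k : Fin w.len,
        (dd k = true ∧ G.tail (ed₁ k) = w.vtx k ∧ G.head (ed₁ k) = w.vtx ((k:ℕ)+1))
        ∨ (dd k = false ∧ G.head (ed₁ k) = w.vtx k ∧ G.tail (ed₁ k) = w.vtx ((k:ℕ)+1)) :=
      fun k => edgAt_spec w k k.isLt
    have hstep : ∀ k : Fin w.len, w.vtx k ≠ w.vtx ((k:ℕ)+1) := by
      intro k hkeq
      have hklt := k.isLt
      exact hrep' (k:ℕ) ((k:ℕ)+1) (by omega) (by omega) (by omega) hkeq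
    have hnear : ∀ i j : Fin (w.len+1), x₁ i = x₁ j →
        i = j ∨ (i = 0 ∧ j = Fin.last w.len) ∨ (i = Fin.last w.len ∧ j = 0) := by
      intro i j hxe
      have hi := i.isLt
      have hj := j.isLt
      rcases Nat.lt_trichotomy i.val j.val with hlt | heqv | hgt
      · by_cases hcs : (i:ℕ) = 0 ∧ (j:ℕ) = w.len
        · exact Or.inr (Or.inl ⟨Fin.ext hcs.1, Fin.ext hcs.2⟩)
        · exact absurd hxe (hrep' i j hlt (by omega) hcs)
      · exact Or.inl (Fin.ext heqv)
      · by_cases hcs : (j:ℕ) = 0 ∧ (i:ℕ) = w.len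
        · exact Or.inr (Or.inr ⟨Fin.ext hcs.2, Fin.ext hcs.1⟩)
        · exact absurd hxe.symm (hrep' j i hgt (by omega) hcs)
    by_cases h22 : w.len = 2 ∧ ∀ (h2 : 2 ≤ w.len), ed₁ ⟨0, by omega⟩ = ed₁ ⟨1, by omega⟩
    · -- length 2 walk using the same edge back and forth
      obtain ⟨hn2', hedeq'⟩ := h22
      have hedeq := hedeq' hn2
      have hne01 : w.vtx 0 ≠ w.vtx 1 := by
        have := hstep ⟨0, by omega⟩
        simpa using this
      rcases hspec ⟨0, by omega⟩ with ⟨hd0, ht0, hh0⟩ | ⟨hd0, hh0, ht0⟩ <;>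
        rcases hspec ⟨1, by omega⟩ with ⟨hd1, ht1, hh1⟩ | ⟨hd1, hh1, ht1⟩
      · exfalso
        apply hne01
        rw [← ht0, hedeq, ht1]
      · -- dd0 = true, dd1 = false
        have hmu2 : mu β w = (cond (dd ⟨0, by omega⟩) (1:ℝ) (-1)) * (β (ed₁ ⟨0, by omega⟩) * G.len (ed₁ ⟨0, by omega⟩))
            + (cond (dd ⟨1, by omega⟩) (1:ℝ) (-1)) * (β (ed₁ ⟨1, by omega⟩) * G.len (ed₁ ⟨1, by omega⟩)) := by
          rw [mu_eq_sum β w]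
          rw [← Fin.sum_congr' _ hn2'.symm, Fin.sum_univ_two]
          rfl
        rw [hmu2, hd0, hd1, hedeq, Bool.cond_true, Bool.cond_false]
        ring
      · -- dd0 = false, dd1 = true
        have hmu2 : mu β w = (cond (dd ⟨0, by omega⟩) (1:ℝ) (-1)) * (β (ed₁ ⟨0, by omega⟩) * G.len (ed₁ ⟨0, by omega⟩))
            + (cond (dd ⟨1, by omega⟩) (1:ℝ) (-1)) * (β (ed₁ ⟨1, by omega⟩) * G.len (ed₁ ⟨1, by omega⟩)) := by
          rw [mu_eq_sum β w]
          rw [← Fin.sum_congr' _ hn2'.symm, Fin.sum_univ_two]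
          rfl
        rw [hmu2, hd0, hd1, hedeq, Bool.cond_true, Bool.cond_false]
        ring
      · exfalso
        apply hne01
        rw [← hh0, hedeq, hh1]
    · -- the walk is a genuine circuit
      have hcross : ∀ a b : Fin w.len, (a:ℕ) < (b:ℕ) →
          w.vtx a = w.vtx ((b:ℕ)+1) → w.vtx ((a:ℕ)+1) = w.vtx b → ed₁ a = ed₁ b → False := by
        intro a b hab hv1 hv2 hedab
        have hbl := b.isLt
        have hal := a.isLt
        by_cases hc1 : (a:ℕ) = 0 ∧ (b:ℕ)+1 = w.len
        · by_cases hc2 : (1:ℕ) < (b:ℕ)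
          · have hv2' : w.vtx 1 = w.vtx (b:ℕ) := by
              rw [← hv2]
              congr 1
              omega
            exact hrep' 1 b hc2 (by omega) (by omega) hv2'
          · have hn2'' : w.len = 2 := by omega
            apply h22
            refine ⟨hn2'', fun _ => ?_⟩
            have haf : a = (⟨0, by omega⟩ : Fin w.len) := by
              apply Fin.ext
              show (a : ℕ) = 0
              omega
            have hbf : b = (⟨1, by omega⟩ : Fin w.len) := by
              apply Fin.ext
              show (b : ℕ) = 1
              omega
            rw [← haf, ← hbf]
            exact hedab
        · exact hrep' a ((b:ℕ)+1) (by omega) (by omega) hc1 hv1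
      have hcore : ∀ a b : Fin w.len, (a:ℕ) < (b:ℕ) → ed₁ a = ed₁ b → False := by
        intro a b hab hedab
        have hbl := b.isLt
        have hsame : w.vtx (a:ℕ) = w.vtx (b:ℕ) → False := fun hv =>
          hrep' a b hab (by omega) (by omega) hv
        rcases hspec a with ⟨hda, hta, hha⟩ | ⟨hda, hha, hta⟩ <;>
          rcases hspec b with ⟨hdb, htb, hhb⟩ | ⟨hdb, hhb, htb⟩
        · exact hsame (by rw [← hta, hedab, htb])
        · exact hcross a b hab (by rw [← hta, hedab, htb]) (by rw [← hha, hedab, hhb]) hedab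
        · exact hcross a b hab (by rw [← hha, hedab, hhb]) (by rw [← hta, hedab, htb]) hedab
        · exact hsame (by rw [← hha, hedab, hhb])
      have hinj : Function.Injective ed₁ := by
        intro a b hedab
        rcases Nat.lt_trichotomy a.val b.val with hlt | heqv | hgt
        · exact absurd hedab fun h => hcore a b hlt h
        · exact Fin.ext heqv
        · exact absurd hedab.symm fun h => hcore b a hgt h
      have hx0l : x₁ 0 = x₁ (Fin.last w.len) := by
        show w.vtx 0 = w.vtx w.len
        rw [vtx_zero, vtx_past w w.len (le_refl _)]
      have hor : ∀ k : Fin w.len,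
          (G.tail (ed₁ k) = x₁ k.castSucc ∧ G.head (ed₁ k) = x₁ k.succ)
          ∨ (G.tail (ed₁ k) = x₁ k.succ ∧ G.head (ed₁ k) = x₁ k.castSucc) := by
        intro k
        rcases hspec k with ⟨_, ht, hh⟩ | ⟨_, hh, ht⟩
        · exact Or.inl ⟨ht, hh⟩
        · exact Or.inr ⟨ht, hh⟩
      have hcirc : G.IsCircuit x₁ ed₁ := ⟨by omega, hinj, hx0l, hnear, hor⟩
      have hsum := hβ w.len x₁ ed₁ hcirc
      rw [mu_eq_sum β w, ← hsum]
      refine Finset.sum_congr rfl fun k _ => ?_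
      have hceq : (G.ceps x₁ ed₁ k : ℝ) = cond (dd k) 1 (-1) := by
        rcases hspec k with ⟨hdk, htk, _⟩ | ⟨hdk, _, htk⟩
        · rw [hdk]
          have : G.ceps x₁ ed₁ k = 1 := if_pos htk
          rw [this]
          norm_num
        · rw [hdk]
          have : G.ceps x₁ ed₁ k = -1 := by
            apply if_neg
            intro hcontra
            exact hstep k ((hcontra.symm.trans htk))
          rw [this]
          norm_num
      rw [hceq]

end Closed

end WGraph

namespace WGraph

section Aux6

open Finset

variable {G : WGraph}

lemma single_decomp' {ι R : Type*} [Fintype ι] [DecidableEq ι] [Semiring R] (α : ι → R) :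
    α = ∑ i, (α i) • (Pi.single i 1 : ι → R) := by
  funext j
  rw [Finset.sum_apply]
  have h : ∀ i, (α i • (Pi.single i 1 : ι → R)) j = if j = i then α i else 0 := by
    intro i
    rw [Pi.smul_apply, Pi.single_apply, smul_eq_mul]
    split <;> simp
  simp_rw [h]
  rw [Finset.sum_ite_eq Finset.univ j α, if_pos (Finset.mem_univ _)]

lemma exact_of_circuit_orth (hG : G.Connected) (β : G.E → ℤ)
    (hβ : ∀ (m : ℕ) (x : Fin (m+1) → G.V) (ed : Fin m → G.E), G.IsCircuit x ed →
      ∑ k : Fin m, (G.ceps x ed k : ℝ) * ((β (ed k) : ℝ) * G.len (ed k)) = 0) :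
    G.IsExactZ β := by
  by_cases hV : Nonempty G.V
  · obtain ⟨v₀⟩ := hV
    have wk : ∀ x : G.V, Walk G v₀ x := fun x => Classical.choice (Walk.exists_walk hG v₀ x)
    have hclosed : ∀ (x : G.V) (w : Walk G x x), Walk.mu (fun g => (β g : ℝ)) w = 0 := by
      intro x w
      exact mu_closed (fun g => (β g : ℝ)) hβ w.len w rfl
    refine ⟨fun x => Walk.mu (fun g => (β g : ℝ)) (wk x), ?_⟩
    intro g
    have h0 : Walk.mu (fun g => (β g : ℝ))
        ((wk (G.tail g)).append
          ((Walk.cons g true ⟨rfl, rfl⟩ (Walk.nil (G.head g))).append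
            (Walk.reverse (wk (G.head g))))) = 0 := hclosed _ _
    rw [Walk.mu_append, Walk.mu_append, Walk.mu_reverse] at h0
    have hstep : Walk.mu (fun g => (β g : ℝ))
        (Walk.cons g true ⟨rfl, rfl⟩ (Walk.nil (G.head g))) = (β g : ℝ) * G.len g := by
      show (cond true (1:ℝ) (-1)) * ((β g : ℝ) * G.len g) + 0 = _
      rw [Bool.cond_true]
      ring
    rw [hstep] at h0
    show (β g : ℝ) = G.d _ g
    unfold d
    rw [eq_comm, div_eq_iff (ne_of_gt (G.len_pos g))]
    linarith [h0]
  · exact ⟨fun _ => 0, fun g => absurd ⟨G.tail g⟩ hV⟩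

lemma symm_solvable {m : Type} [Fintype m] [DecidableEq m] (M : m → m → ℚ)
    (hsym : ∀ s t, M s t = M t s) (v : m → ℚ)
    (hv : ∀ a : m → ℚ, (∀ t, ∑ s, M t s * a s = 0) → ∑ s, v s * a s = 0) :
    ∃ a : m → ℚ, ∀ t, ∑ s, M t s * a s = v t := by
  classical
  set T : (m → ℚ) →ₗ[ℚ] (m → ℚ) :=
    { toFun := fun a => fun t => ∑ s, M t s * a s
      map_add' := by
        intro a b
        funext t
        simp [mul_add, Finset.sum_add_distrib]
      map_smul' := by
        intro c a
        funext t
        simp only [Pi.smul_apply, smul_eq_mul, RingHom.id_apply]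
        rw [Finset.mul_sum]
        refine Finset.sum_congr rfl fun s _ => ?_
        ring } with hT
  have hTdef : ∀ (b : m → ℚ) (r : m), T b r = ∑ s, M r s * b s := fun b r => rfl
  by_contra hno
  push_neg at hno
  have hvr : v ∉ LinearMap.range T := by
    intro hmem
    obtain ⟨a, ha⟩ := hmem
    obtain ⟨t, hne⟩ := hno a
    apply hne
    have := congrFun ha t
    exact this
  have hvr' : v ∉ (LinearMap.range T).dualAnnihilator.dualCoannihilator := by
    rw [Subspace.dualAnnihilator_dualCoannihilator_eq]
    exact hvr
  rw [Submodule.mem_dualCoannihilator] at hvr'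
  push_neg at hvr'
  obtain ⟨φ, hφmem, hφv⟩ := hvr'
  rw [Submodule.mem_dualAnnihilator] at hφmem
  set a : m → ℚ := fun s => φ (Pi.single s 1) with ha
  have hφeq : ∀ wv : m → ℚ, φ wv = ∑ s, wv s * a s := by
    intro wv
    conv_lhs => rw [single_decomp' wv]
    rw [map_sum]
    refine Finset.sum_congr rfl fun s _ => ?_
    rw [map_smul, smul_eq_mul]
  have hMa : ∀ t, ∑ s, M t s * a s = 0 := by
    intro t
    have h1 : φ (T (Pi.single t 1)) = 0 := hφmem _ ⟨Pi.single t 1, rfl⟩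
    rw [hφeq] at h1
    have h2 : ∀ r, (T (Pi.single t 1)) r = M r t := by
      intro r
      rw [hTdef]
      have h3 : ∀ s, M r s * (Pi.single t (1:ℚ) : m → ℚ) s = if s = t then M r s else 0 := by
        intro s
        rw [Pi.single_apply]
        split <;> simp
      simp_rw [h3]
      rw [Finset.sum_ite_eq' Finset.univ t (fun s => M r s), if_pos (Finset.mem_univ _)]
    simp_rw [h2] at h1
    rw [← h1]
    refine Finset.sum_congr rfl fun s _ => ?_
    rw [hsym]
  have hva := hv a hMa
  apply hφv
  rw [hφeq v]
  exact hva

end Aux6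

end WGraph

namespace WGraph

section Aux7

open Finset

variable {G : WGraph}

lemma cvec_entry {n : ℕ} {x : Fin (n+1) → G.V} {ed : Fin n → G.E}
    (hc : G.IsCircuit x ed) (g : G.E) :
    G.cvec x ed g = 0 ∨ G.cvec x ed g = 1 ∨ G.cvec x ed g = -1 := by
  by_cases hg : ∃ m, ed m = g
  · obtain ⟨m, rfl⟩ := hg
    rw [cvec_ed hc.2.1]
    unfold ceps
    split
    · exact Or.inr (Or.inl rfl)
    · exact Or.inr (Or.inr rfl)
  · push_neg at hg
    exact Or.inl (cvec_not_mem hg)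

lemma reverse_dir (G : WGraph) (hG : G.Connected)
    (hcomm : ∀ (n : ℕ) (x : Fin (n + 1) → G.V) (ed : Fin n → G.E), G.IsCircuit x ed →
      ∀ i j : Fin n, ∃ q : ℚ, G.len (ed i) = q * G.len (ed j)) :
    Finite G.Jac := by
  classical
  apply finite_of_tor
  intro e
  have hqex : ∀ g : G.E, G.Rel g e → ∃ qq : ℚ, 0 < qq ∧ G.len g = (qq : ℝ) * G.len e := by
    intro g hg
    obtain ⟨qq, hq1⟩ := hg
    refine ⟨qq, ?_, hq1⟩
    have h1 : (0:ℝ) < (qq:ℝ) * G.len e := hq1 ▸ G.len_pos g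
    have h2 := G.len_pos e
    by_contra hq0
    push_neg at hq0
    have h3 : (qq:ℝ) ≤ 0 := by exact_mod_cast hq0
    nlinarith
  set q : G.E → ℚ := fun g => if h : G.Rel g e then (hqex g h).choose else 0 with hqdef
  have hqspec : ∀ g (h : G.Rel g e), 0 < q g ∧ G.len g = (q g : ℝ) * G.len e := by
    intro g h
    simp only [hqdef, dif_pos h]
    exact (hqex g h).choose_spec
  have hq0 : ∀ g, 0 ≤ q g := by
    intro g
    by_cases h : G.Rel g e
    · exact le_of_lt (hqspec g h).1
    · simp only [hqdef, dif_neg h]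
      exact le_rfl
  set P : (G.E → ℤ) → Prop := fun γ =>
    (∃ (m : ℕ) (x : Fin (m+1) → G.V) (ed : Fin m → G.E), G.IsCircuit x ed ∧ γ = G.cvec x ed)
    ∧ ∀ g, γ g ≠ 0 → G.Rel g e with hP
  have hPfin : {γ : G.E → ℤ | P γ}.Finite := by
    apply Set.Finite.subset
      (Set.finite_range (fun (f : G.E → Fin 3) => (fun g => ((f g : ℤ) - 1) : G.E → ℤ)))
    rintro γ hγ
    obtain ⟨⟨m, x, ed, hc, rfl⟩, -⟩ := hγ
    refine ⟨fun g => ⟨(G.cvec x ed g + 1).toNat, ?_⟩, ?_⟩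
    · rcases cvec_entry hc g with h | h | h <;> simp [h]
    · funext g
      rcases cvec_entry hc g with h | h | h <;> simp [h]
  set SA : Finset (G.E → ℤ) := hPfin.toFinset with hSAdef
  have hSAmem : ∀ γ, γ ∈ SA ↔ P γ := fun γ => Set.Finite.mem_toFinset hPfin
  set Mt : SA → SA → ℚ := fun s t => ∑ g, ((s.1 g : ℚ) * (t.1 g : ℚ)) * q g with hMt
  have hsym : ∀ s t, Mt s t = Mt t s := by
    intro s t
    simp only [hMt]
    exact Finset.sum_congr rfl fun g _ => by ring
  set vv : SA → ℚ := fun t => (t.1 e : ℚ) with hvv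
  have hker : ∀ a : SA → ℚ, (∀ t, ∑ s, Mt t s * a s = 0) → ∑ s, vv s * a s = 0 := by
    intro a hMa
    set wf : G.E → ℚ := fun g => ∑ s : SA, a s * (s.1 g : ℚ) with hwf
    have hexp : ∑ g, q g * (wf g)^2 = ∑ t : SA, a t * ∑ s, Mt t s * a s := by
      have h2 : ∀ t : SA, a t * ∑ s, Mt t s * a s
          = ∑ s : SA, ∑ g, (a t * (t.1 g : ℚ)) * ((a s * (s.1 g : ℚ)) * q g) := by
        intro t
        rw [Finset.mul_sum]
        refine Finset.sum_congr rfl fun s _ => ?_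
        simp only [hMt]
        rw [Finset.sum_mul, Finset.mul_sum]
        refine Finset.sum_congr rfl fun g _ => by ring
      rw [Finset.sum_congr rfl fun t _ => h2 t]
      have h3 : ∀ g, q g * (wf g)^2
          = ∑ t : SA, ∑ s : SA, (a t * (t.1 g : ℚ)) * ((a s * (s.1 g : ℚ)) * q g) := by
        intro g
        rw [hwf, sq, Finset.sum_mul_sum, Finset.mul_sum]
        refine Finset.sum_congr rfl fun t _ => ?_
        rw [Finset.mul_sum]
        refine Finset.sum_congr rfl fun s _ => by ring
      rw [Finset.sum_congr rfl fun g _ => h3 g]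
      rw [Finset.sum_comm]
      exact Finset.sum_congr rfl fun t _ => Finset.sum_comm
    have hquad : ∑ g, q g * (wf g)^2 = 0 := by
      rw [hexp]
      exact Finset.sum_eq_zero fun t _ => by rw [hMa t, mul_zero]
    have hterm : ∀ g, q g * (wf g)^2 = 0 := fun g =>
      (Finset.sum_eq_zero_iff_of_nonneg
        (fun g _ => mul_nonneg (hq0 g) (sq_nonneg _))).mp hquad g (Finset.mem_univ g)
    have hwzero : ∀ g, wf g = 0 := by
      intro g
      by_cases hRg : G.Rel g e
      · have hqg : 0 < q g := (hqspec g hRg).1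
        rcases mul_eq_zero.mp (hterm g) with h | h
        · exact absurd h (ne_of_gt hqg)
        · exact sq_eq_zero_iff.mp h
      · rw [hwf]
        refine Finset.sum_eq_zero fun s _ => ?_
        have hs := (hSAmem s.1).mp s.2
        have hsg : s.1 g = 0 := by
          by_contra hne
          exact hRg (hs.2 g hne)
        rw [hsg]
        simp
    have hfin2 : ∑ s, vv s * a s = ∑ s : SA, a s * (s.1 e : ℚ) :=
      Finset.sum_congr rfl fun s _ => by rw [hvv]; ring
    rw [hfin2]
    exact hwzero e
  obtain ⟨aa, haa⟩ := symm_solvable Mt hsym vv hker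
  set D : ℤ := ∏ s : SA, ((aa s).den : ℤ) with hD
  have hDpos : 0 < D :=
    Finset.prod_pos fun s _ => Int.natCast_pos.mpr (aa s).den_pos
  set b : SA → ℤ := fun s => (aa s).num * ∏ t ∈ Finset.univ.erase s, ((aa t).den : ℤ) with hb
  have hbcast : ∀ s, (b s : ℚ) = (D : ℚ) * aa s := by
    intro s
    simp only [hb, hD]
    push_cast
    rw [← Finset.mul_prod_erase Finset.univ (fun t => ((aa t).den : ℚ)) (Finset.mem_univ s)]
    have hden : ((aa s).den : ℚ) ≠ 0 := by
      exact_mod_cast (aa s).den_ne_zero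
    have hnum : ((aa s).num : ℚ) = aa s * ((aa s).den : ℚ) :=
      (div_eq_iff hden).mp (Rat.num_div_den (aa s))
    rw [hnum]
    ring
  set z : G.E → ℤ := ∑ s : SA, b s • s.1 with hz
  have hzc : G.IsCycleZ z := by
    rw [hz]
    refine isCycleZ_sum _ _ fun s _ => ?_
    obtain ⟨⟨m, x, ed, hc, hrep⟩, -⟩ := (hSAmem s.1).mp s.2
    rw [hrep]
    exact isCycleZ_zsmul _ (isCycleZ_cvec hc)
  refine ⟨D, hDpos, ?_⟩
  rw [jacRel_eq]
  apply AddSubgroup.mem_sup.mpr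
  refine ⟨z, hzc, D • (Pi.single e 1) - z, ?_, by abel⟩
  show G.IsExactZ (D • (Pi.single e 1) - z)
  apply exact_of_circuit_orth hG
  intro m x ed hc
  have hβexp : ∀ g, (((D • (Pi.single e 1 : G.E → ℤ) - z) g : ℤ) : ℝ)
      = (D:ℝ) * (if g = e then 1 else 0) - (z g : ℝ) := by
    intro g
    rw [Pi.sub_apply, Pi.smul_apply, Pi.single_apply, smul_eq_mul]
    push_cast
    split <;> ring
  have hgoal : ∑ g, (G.cvec x ed g : ℝ)
      * ((((D • (Pi.single e 1 : G.E → ℤ) - z) g : ℤ) : ℝ) * G.len g) = 0 := by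
    by_cases hclass : ∀ g, G.cvec x ed g ≠ 0 → G.Rel g e
    · have hPγ : P (G.cvec x ed) := ⟨⟨m, x, ed, hc, rfl⟩, hclass⟩
      set γel : {γ // γ ∈ SA} := ⟨G.cvec x ed, (hSAmem _).mpr hPγ⟩ with hγel
      have hsplit1 : ∑ g, (G.cvec x ed g : ℝ)
          * ((((D • (Pi.single e 1 : G.E → ℤ) - z) g : ℤ) : ℝ) * G.len g)
          = (D:ℝ) * ((G.cvec x ed e : ℝ) * G.len e)
            - ∑ g, (G.cvec x ed g : ℝ) * ((z g : ℝ) * G.len g) := by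
        have h5 : ∀ g, (G.cvec x ed g : ℝ)
            * ((((D • (Pi.single e 1 : G.E → ℤ) - z) g : ℤ) : ℝ) * G.len g)
            = (D:ℝ) * (if g = e then (G.cvec x ed g : ℝ) * G.len g else 0)
              - (G.cvec x ed g : ℝ) * ((z g : ℝ) * G.len g) := by
          intro g
          rw [hβexp g]
          split <;> ring
        rw [Finset.sum_congr rfl fun g _ => h5 g, Finset.sum_sub_distrib, ← Finset.mul_sum]
        rw [Finset.sum_ite_eq' Finset.univ e (fun g => (G.cvec x ed g : ℝ) * G.len g),
          if_pos (Finset.mem_univ _)]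
      have hZg : ∀ g, ((z g : ℤ) : ℝ) = ∑ s : SA, (b s : ℝ) * (s.1 g : ℝ) := by
        intro g
        rw [hz, Finset.sum_apply]
        push_cast
        refine Finset.sum_congr rfl fun s _ => ?_
        rw [Pi.smul_apply, smul_eq_mul]
        push_cast
        ring
      have hzpart : ∑ g, (G.cvec x ed g : ℝ) * ((z g : ℝ) * G.len g)
          = G.len e * ((∑ s : SA, (b s : ℚ) * Mt γel s : ℚ) : ℝ) := by
        have h6 : ∀ g, (G.cvec x ed g : ℝ) * ((z g : ℝ) * G.len g)
            = ∑ s : SA, (b s : ℝ) * ((G.cvec x ed g : ℝ) * ((s.1 g : ℝ) * G.len g)) := by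
          intro g
          rw [hZg g, Finset.sum_mul, Finset.mul_sum]
          refine Finset.sum_congr rfl fun s _ => by ring
        rw [Finset.sum_congr rfl fun g _ => h6 g, Finset.sum_comm]
        have h7 : ∀ s : SA, ∑ g, (b s : ℝ) * ((G.cvec x ed g : ℝ) * ((s.1 g : ℝ) * G.len g))
            = (b s : ℝ) * (G.len e * ((Mt γel s : ℚ) : ℝ)) := by
          intro s
          rw [← Finset.mul_sum]
          congr 1
          have h8 : ∀ g, (G.cvec x ed g : ℝ) * ((s.1 g : ℝ) * G.len g)
              = G.len e * ((G.cvec x ed g : ℝ) * (s.1 g : ℝ) * ((q g : ℚ) : ℝ)) := by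
            intro g
            by_cases hsg : s.1 g = 0
            · rw [hsg]
              push_cast
              ring
            · have hRg : G.Rel g e := ((hSAmem s.1).mp s.2).2 g hsg
              rw [(hqspec g hRg).2]
              ring
          rw [Finset.sum_congr rfl fun g _ => h8 g, ← Finset.mul_sum]
          congr 1
          simp only [hMt]
          push_cast
          exact Finset.sum_congr rfl fun g _ => by ring
        rw [Finset.sum_congr rfl fun s _ => h7 s]
        push_cast
        rw [Finset.mul_sum]
        refine Finset.sum_congr rfl fun s _ => by ring
      have hlin : (∑ s : SA, (b s : ℚ) * Mt γel s) = (D:ℚ) * vv γel := by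
        have h9 : ∀ s, (b s : ℚ) * Mt γel s = (D:ℚ) * (Mt γel s * aa s) := by
          intro s
          rw [hbcast s]
          ring
        rw [Finset.sum_congr rfl fun s _ => h9 s, ← Finset.mul_sum, haa γel]
      rw [hsplit1, hzpart, hlin]
      have hvvγ : vv γel = (G.cvec x ed e : ℚ) := rfl
      rw [hvvγ]
      push_cast
      ring
    · push_neg at hclass
      obtain ⟨g₀, hg₀ne, hg₀R⟩ := hclass
      have hall : ∀ g, G.cvec x ed g ≠ 0 → ¬ G.Rel g e := by
        intro g hgne hRg
        obtain ⟨m₀, hm₀⟩ := cvec_support hg₀ne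
        obtain ⟨mg, hmg⟩ := cvec_support hgne
        have hpair : G.Rel (ed mg) (ed m₀) := hcomm m x ed hc mg m₀
        have hRgg₀ : G.Rel g g₀ := by
          rw [← hmg, ← hm₀]
          exact hpair
        exact hg₀R (Rel.trans (Rel.symm hRgg₀) hRg)
      refine Finset.sum_eq_zero fun g _ => ?_
      by_cases hgz : G.cvec x ed g = 0
      · rw [hgz]
        push_cast
        ring
      · have hnR := hall g hgz
        have hge : g ≠ e := fun h => hnR (h ▸ rel_refl e)
        have hzg : z g = 0 := by
          rw [hz, Finset.sum_apply]
          refine Finset.sum_eq_zero fun s _ => ?_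
          have hs := (hSAmem s.1).mp s.2
          have hsg : s.1 g = 0 := by
            by_contra hne
            exact hnR (hs.2 g hne)
          rw [Pi.smul_apply, hsg, smul_zero]
        have hβg : (D • (Pi.single e 1 : G.E → ℤ) - z) g = 0 := by
          rw [Pi.sub_apply, Pi.smul_apply, Pi.single_apply, if_neg hge, hzg]
          simp
        rw [hβg]
        push_cast
        ring
  exact (sum_mul_cvec x ed
    (fun g => (((D • (Pi.single e 1 : G.E → ℤ) - z) g : ℤ) : ℝ) * G.len g)).symm.trans hgoal

end Aux7

end WGraph

/-- `J(G)` is finite if and only if, within each maximal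
2-connected subgraph, all edge lengths are pairwise commensurable; equivalently,
any two edges lying on a common circuit have commensurable lengths. -/
theorem jacobian_finite_iff_commensurable (G : WGraph) (hG : G.Connected) :
    Finite G.Jac ↔
      ∀ (n : ℕ) (x : Fin (n + 1) → G.V) (ed : Fin n → G.E), G.IsCircuit x ed →
        ∀ i j : Fin n, ∃ q : ℚ, G.len (ed i) = q * G.len (ed j) := by
  constructor
  · intro hfin
    exact WGraph.forward_dir G hfin
  · intro hcomm
    exact WGraph.reverse_dir G hG hcomm
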